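/- Let k, l be positive integers and define g : ℝ² → ℝ by g(x,y) = x^{2k} y^{2k} / (x^{2kl} + y^{2kl})^{1/l} for (x,y) ≠ (0,0) and g(0,0) = 0. Then g is of class C^k on ℝ². -/

import Mathlib

/-!
The function is positively homogeneous of degree `2k` (the denominator scales like `c ^ (2k)`)
and smooth away from the origin. A function homogeneous of degree `d` that is continuous off the
origin is bounded by `C ‖x‖ ^ d`, so for `d ≥ 2` it has derivative `0` at the origin, and its
derivative is homogeneous of degree `d - 1`. Induction on `n` then shows that such a function,
if `C^n` off the origin with `n < d`, is `C^n` everywhere.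
-/

open Asymptotics Filter Topology

universe u

-- One universe for `E` and `F`: the induction in `contDiff` replaces `F` by `E →L[ℝ] F`.
variable {E F : Type u} [NormedAddCommGroup E] [NormedSpace ℝ E]
  [NormedAddCommGroup F] [NormedSpace ℝ F]

def IsPosHomogeneous (f : E → F) (d : ℕ) : Prop :=
  ∀ c : ℝ, 0 < c → ∀ x, f (c • x) = c ^ d • f x

namespace IsPosHomogeneous

variable {f : E → F} {d : ℕ}

theorem apply_zero (hf : IsPosHomogeneous f d) (hd : d ≠ 0) : f 0 = 0 := by
  have h := hf 2 two_pos 0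
  rw [smul_zero] at h
  have h' : ((2 : ℝ) ^ d - 1) • f 0 = 0 := by rw [sub_smul, one_smul, ← h, sub_self]
  exact (smul_eq_zero.1 h').resolve_left (sub_ne_zero.2 (one_lt_pow₀ one_lt_two hd).ne')

theorem isBigO_norm_pow [ProperSpace E] (hf : IsPosHomogeneous f d) (hd : d ≠ 0)
    (hcont : ContinuousOn f {0}ᶜ) : f =O[𝓝 0] fun x => ‖x‖ ^ d := by
  obtain ⟨C, hC⟩ := (isCompact_sphere (0 : E) 1).exists_bound_of_continuousOn
    (hcont.mono fun x hx => by simp_all [ne_zero_of_mem_unit_sphere ⟨x, hx⟩])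
  refine IsBigO.of_bound C (Eventually.of_forall fun x => ?_)
  rcases eq_or_ne x 0 with rfl | hx
  · simp [hf.apply_zero hd, zero_pow hd]
  · have hxn : 0 < ‖x‖ := norm_pos_iff.2 hx
    have hx' : f x = ‖x‖ ^ d • f (‖x‖⁻¹ • x) := by
      rw [← hf _ hxn, smul_smul, mul_inv_cancel₀ hxn.ne', one_smul]
    have hmem : ‖x‖⁻¹ • x ∈ Metric.sphere (0 : E) 1 := by
      simp [norm_smul, inv_mul_cancel₀ hxn.ne']
    rw [hx', norm_smul, norm_pow, norm_norm, mul_comm]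
    gcongr
    exact hC _ hmem

theorem hasFDerivAt_zero [ProperSpace E] (hf : IsPosHomogeneous f d) (hd : 1 < d)
    (hcont : ContinuousOn f {0}ᶜ) : HasFDerivAt f (0 : E →L[ℝ] F) 0 := by
  rw [hasFDerivAt_iff_isLittleO_nhds_zero]
  simpa [hf.apply_zero (by omega)] using
    (hf.isBigO_norm_pow (by omega) hcont).trans_isLittleO (isLittleO_norm_pow_id hd)

theorem fderiv (hf : IsPosHomogeneous f (d + 1)) : IsPosHomogeneous (fderiv ℝ f) d := by
  intro c hc x
  have h := fderiv_comp_smul (f := f) (x := x) c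
  rw [show (fun y => f (c • y)) = c ^ (d + 1) • f from funext (hf c hc),
    fderiv_const_smul_field, pow_succ', mul_smul] at h
  exact (smul_right_injective _ hc.ne' h).symm

theorem contDiff [ProperSpace E] {n : ℕ} (hf : IsPosHomogeneous f d) (hnd : n < d)
    (hsm : ContDiffOn ℝ n f {0}ᶜ) : ContDiff ℝ n f := by
  induction n generalizing F d with
  | zero =>
    rw [Nat.cast_zero, contDiff_zero, continuous_iff_continuousAt]
    intro x
    rcases eq_or_ne x 0 with rfl | hx
    · rw [ContinuousAt, hf.apply_zero hnd.ne']
      refine (hf.isBigO_norm_pow hnd.ne' hsm.continuousOn).trans_tendsto ?_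
      exact (by fun_prop : Continuous fun x : E => ‖x‖ ^ d).tendsto' 0 0 (by simp [hnd.ne'])
    · exact hsm.continuousOn.continuousAt (isOpen_compl_singleton.mem_nhds hx)
  | succ n ih =>
    obtain ⟨d, rfl⟩ : ∃ d', d = d' + 1 := ⟨d - 1, by omega⟩
    have hdiff : Differentiable ℝ f := fun x => by
      rcases eq_or_ne x 0 with rfl | hx
      · exact (hf.hasFDerivAt_zero (by omega) hsm.continuousOn).differentiableAt
      · exact (hsm.contDiffAt (isOpen_compl_singleton.mem_nhds hx)).differentiableAt
          (by simp)
    rw [Nat.cast_succ, contDiff_succ_iff_fderiv]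
    exact ⟨hdiff, by simp, ih hf.fderiv (by omega)
      (hsm.fderiv_of_isOpen isOpen_compl_singleton le_rfl)⟩

end IsPosHomogeneous

noncomputable def powRatio (k l : ℕ) (q : ℝ × ℝ) : ℝ :=
  q.1 ^ (2 * k) * q.2 ^ (2 * k) / (q.1 ^ (2 * k * l) + q.2 ^ (2 * k * l)) ^ ((1 : ℝ) / l)

theorem powRatio_isPosHomogeneous (k : ℕ) {l : ℕ} (hl : l ≠ 0) :
    IsPosHomogeneous (powRatio k l) (2 * k) := by
  rintro c hc ⟨x, y⟩
  have hev : Even (2 * k * l) := (even_two_mul k).mul_right l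
  have hden : ((c * x) ^ (2 * k * l) + (c * y) ^ (2 * k * l)) ^ ((1 : ℝ) / l) =
      c ^ (2 * k) * (x ^ (2 * k * l) + y ^ (2 * k * l)) ^ ((1 : ℝ) / l) := by
    rw [mul_pow, mul_pow, ← mul_add, Real.mul_rpow (by positivity)
      (add_nonneg (hev.pow_nonneg x) (hev.pow_nonneg y)), pow_mul, one_div,
      Real.pow_rpow_inv_natCast (by positivity) hl]
  simp only [powRatio, Prod.smul_mk, smul_eq_mul]
  rw [hden, mul_pow, mul_pow, mul_mul_mul_comm, mul_assoc, mul_div_mul_left _ _ (by positivity),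
    mul_div_assoc]

theorem powRatio_contDiffOn (k l : ℕ) {n : WithTop ℕ∞} :
    ContDiffOn ℝ n (powRatio k l) {0}ᶜ := by
  rintro ⟨x, y⟩ hq
  have hev : Even (2 * k * l) := (even_two_mul k).mul_right l
  have hS : 0 < x ^ (2 * k * l) + y ^ (2 * k * l) := by
    rcases not_and_or.1 (mt Prod.ext_iff.2 hq) with hx | hy
    · exact add_pos_of_pos_of_nonneg (hev.pow_pos hx) (hev.pow_nonneg y)
    · exact add_pos_of_nonneg_of_pos (hev.pow_nonneg x) (hev.pow_pos hy)
  refine ContDiffAt.contDiffWithinAt (ContDiffAt.div ?_ ?_ (Real.rpow_pos_of_pos hS _).ne')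
  · exact ((contDiff_fst.pow _).mul (contDiff_snd.pow _)).contDiffAt
  · exact ((contDiff_fst.pow _).add (contDiff_snd.pow _)).contDiffAt.rpow_const_of_ne hS.ne'

theorem stmt_3 (k l : ℕ) (hk : 0 < k) (hl : 0 < l) :
    ContDiff ℝ k (fun q : ℝ × ℝ =>
      q.1 ^ (2 * k) * q.2 ^ (2 * k) /
        (q.1 ^ (2 * k * l) + q.2 ^ (2 * k * l)) ^ ((1 : ℝ) / l)) :=
  (powRatio_isPosHomogeneous k hl.ne').contDiff (by omega) (powRatio_contDiffOn k l)
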